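/- Let V be a finite-dimensional real inner product space, 𝔤 ⊆ 𝔰𝔬(V) a Lie subalgebra, and suppose the associative subalgebra of End(V) generated by 𝔤 equals End(V). If L : V → W is a linear map to another inner product space such that, for some faithful normed module over the Clifford algebra of V ⊕ W and unit vector u, one has c(L ∘ ρ)u = 0 for every ρ in the associative algebra generated by 𝔤, where c(L∘ρ) = Σᵢⱼ ⟨L ρ(eᵢ), fⱼ⟩ c_W(fⱼ) c_V(eᵢ) (with orthonormal bases eᵢ of V, fⱼ of W), then L = 0. -/

import Mathlib

open scoped RealInnerProductSpace BigOperators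

/-- Clifford multiplication by a linear map `F : V → W`, i.e.
`c(F) = Σᵢⱼ ⟨F eᵢ, fⱼ⟩ c_W(fⱼ) c_V(eᵢ)` for orthonormal bases `(eᵢ)` of `V`, `(fⱼ)` of `W`. -/
noncomputable def cliffordOfMap {V W U : Type*}
    [NormedAddCommGroup V] [InnerProductSpace ℝ V]
    [NormedAddCommGroup W] [InnerProductSpace ℝ W]
    [NormedAddCommGroup U] [InnerProductSpace ℝ U]
    {m k : ℕ} (e : OrthonormalBasis (Fin m) ℝ V) (f : OrthonormalBasis (Fin k) ℝ W)
    (cV : V → (U →ₗ[ℝ] U)) (cW : W → (U →ₗ[ℝ] U)) (F : V →ₗ[ℝ] W) : U →ₗ[ℝ] U :=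
  ∑ i : Fin m, ∑ j : Fin k, ⟪F (e i), f j⟫ • (cW (f j) ∘ₗ cV (e i))


/-
Take `ρ` to be the rank-one map `x ↦ ⟪h, x⟫ h`, which lies in `End(V)`, the
associative algebra generated by `𝔤`. Then `c(L ∘ ρ) = c_W(L h) c_V(h)`, and by the Clifford
relations `c_V(h)² = -‖h‖²` and `c_W(L h)² = ‖L h‖²`, so both factors are invertible as soon as
`L h ≠ 0`, contradicting `c(L ∘ ρ) u = 0` for `u ≠ 0`.
-/

section

variable {ι V W U A : Type*} [Fintype ι]
  [NormedAddCommGroup V] [InnerProductSpace ℝ V] [NormedAddCommGroup W] [InnerProductSpace ℝ W]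

-- Clifford multiplication by `x`, expanded in the basis `e`; as `c` is not assumed linear,
-- this need not be `c x`.
noncomputable def basisCliffordMul [AddCommMonoid A] [Module ℝ A] (e : OrthonormalBasis ι ℝ V)
    (c : V → A) (x : V) : A :=
  ∑ i, ⟪x, e i⟫ • c (e i)

theorem basisCliffordMul_mul_self [Ring A] [Algebra ℝ A] (e : OrthonormalBasis ι ℝ V)
    (c : V → A) (s : ℝ) (hc : ∀ v v', c v * c v' + c v' * c v = (2 * s * ⟪v, v'⟫) • 1) (x : V) :
    basisCliffordMul e c x * basisCliffordMul e c x = (s * ‖x‖ ^ 2) • 1 := by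
  classical
  set S := basisCliffordMul e c x
  have hexpand : S * S = ∑ i, ∑ j, (⟪x, e i⟫ * ⟪x, e j⟫) • (c (e i) * c (e j)) := by
    simp only [S, basisCliffordMul, Finset.sum_mul_sum, smul_mul_smul_comm]
  have hdouble : S * S + S * S = ((2 * s) * ‖x‖ ^ 2) • 1 := by
    calc S * S + S * S
        = ∑ i, ∑ j, (⟪x, e i⟫ * ⟪x, e j⟫) • (c (e i) * c (e j) + c (e j) * c (e i)) := by
          rw [congrArg₂ (· + ·) hexpand (hexpand.trans Finset.sum_comm), ← Finset.sum_add_distrib]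
          refine Finset.sum_congr rfl fun i _ => ?_
          rw [← Finset.sum_add_distrib]
          refine Finset.sum_congr rfl fun j _ => ?_
          rw [mul_comm ⟪x, e j⟫, smul_add]
      _ = ∑ i, ∑ j, (⟪x, e i⟫ * ⟪x, e j⟫ * (2 * s * if i = j then 1 else 0)) • (1 : A) := by
          simp only [hc, orthonormal_iff_ite.mp e.orthonormal, smul_smul]
      _ = ((2 * s) * ‖x‖ ^ 2) • 1 := by
          simp [← Finset.sum_smul, ← e.sum_sq_inner_left x, Finset.mul_sum, sq, mul_comm]
  rw [← two_smul ℝ, mul_assoc] at hdouble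
  simpa [smul_smul] using congrArg ((2 : ℝ)⁻¹ • ·) hdouble

theorem isUnit_of_mul_self_eq_smul_one {K : Type*} [Field K] [Ring A] [Algebra K A]
    {a : A} {r : K} (hr : r ≠ 0) (ha : a * a = r • 1) : IsUnit a :=
  ⟨⟨a, r⁻¹ • a, by rw [mul_smul_comm, ha, smul_smul, inv_mul_cancel₀ hr, one_smul],
    by rw [smul_mul_assoc, ha, smul_smul, inv_mul_cancel₀ hr, one_smul]⟩, rfl⟩

theorem cliffordOfMap_rankOne [NormedAddCommGroup U] [InnerProductSpace ℝ U] {m k : ℕ}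
    (e : OrthonormalBasis (Fin m) ℝ V) (f : OrthonormalBasis (Fin k) ℝ W)
    (cV : V → (U →ₗ[ℝ] U)) (cW : W → (U →ₗ[ℝ] U)) (w : W) (v : V) :
    cliffordOfMap e f cV cW (InnerProductSpace.rankOne ℝ w v : V →ₗ[ℝ] W)
      = basisCliffordMul f cW w * basisCliffordMul e cV v := by
  simp only [cliffordOfMap, basisCliffordMul, Finset.sum_mul_sum, smul_mul_smul_comm,
    ContinuousLinearMap.coe_coe, InnerProductSpace.rankOne_apply, real_inner_smul_left]
  rw [Finset.sum_comm]
  simp only [mul_comm, Module.End.mul_eq_comp]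

end

theorem map_vanishes_of_clifford_relations_real_type_general
    {V W U : Type*}
    [NormedAddCommGroup V] [InnerProductSpace ℝ V]
    [NormedAddCommGroup W] [InnerProductSpace ℝ W]
    [NormedAddCommGroup U] [InnerProductSpace ℝ U]
    {m k : ℕ} (e : OrthonormalBasis (Fin m) ℝ V) (f : OrthonormalBasis (Fin k) ℝ W)
    (cV : V → (U →ₗ[ℝ] U)) (cW : W → (U →ₗ[ℝ] U))
    (hcV : ∀ v v' : V, cV v ∘ₗ cV v' + cV v' ∘ₗ cV v = (-2 * ⟪v, v'⟫) • LinearMap.id)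
    (hcW : ∀ w w' : W, cW w ∘ₗ cW w' + cW w' ∘ₗ cW w = (2 * ⟪w, w'⟫) • LinearMap.id)
    (𝔤 : Submodule ℝ (V →ₗ[ℝ] V))
    (h𝔤full : Algebra.adjoin ℝ (𝔤 : Set (Module.End ℝ V)) = ⊤)
    (L : V →ₗ[ℝ] W) (u : U) (hu : ‖u‖ = 1)
    (hvanish : ∀ ρ : Module.End ℝ V, ρ ∈ Algebra.adjoin ℝ (𝔤 : Set (Module.End ℝ V)) →
      cliffordOfMap e f cV cW (L ∘ₗ ρ) u = 0) :
    L = 0 := by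
  simp only [← Module.End.mul_eq_comp, ← Module.End.one_eq_id] at hcV hcW
  by_contra hL
  obtain ⟨h, hLh⟩ : ∃ h, L h ≠ 0 := not_forall.mp fun hL0 => hL (LinearMap.ext hL0)
  have hh : h ≠ 0 := by rintro rfl; exact hLh (map_zero L)
  have hCV : IsUnit (basisCliffordMul e cV h) :=
    isUnit_of_mul_self_eq_smul_one (by simpa using hh)
      (basisCliffordMul_mul_self e cV (-1) (fun v v' => by simpa using hcV v v') h)
  have hCW : IsUnit (basisCliffordMul f cW (L h)) :=
    isUnit_of_mul_self_eq_smul_one (by simpa using hLh)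
      (basisCliffordMul_mul_self f cW 1 (fun w w' => by simpa using hcW w w') (L h))
  have hρ := hvanish (InnerProductSpace.rankOne ℝ h h) (h𝔤full ▸ Algebra.mem_top)
  have hLρ : L ∘ₗ (InnerProductSpace.rankOne ℝ h h : V →ₗ[ℝ] V)
      = (InnerProductSpace.rankOne ℝ (L h) h : V →ₗ[ℝ] W) := LinearMap.ext fun x => by simp
  rw [hLρ, cliffordOfMap_rankOne] at hρ
  refine norm_ne_zero_iff.mp (hu ▸ one_ne_zero) ?_
  exact ((Module.End.isUnit_iff _).mp (hCW.mul hCV)).injective (hρ.trans (map_zero _).symm)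

/-- **real type.** Let `𝔤 ⊆ 𝔰𝔬(V)` be a Lie subalgebra whose generated
associative subalgebra is all of `End(V)`, and let `cV`, `cW` be the Clifford multiplications
of `V` and `W` inside (a module over) the Clifford algebra of `V ⊕ W`.  If `L : V → W` is a
linear map and `u` a unit vector such that `c(L ∘ ρ)u = 0` for every `ρ` in the associative
algebra generated by `𝔤`, then `L = 0`. -/
theorem map_vanishes_of_clifford_relations_real_type
    {V W U : Type*}
    [NormedAddCommGroup V] [InnerProductSpace ℝ V] [FiniteDimensional ℝ V]
    [NormedAddCommGroup W] [InnerProductSpace ℝ W] [FiniteDimensional ℝ W]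
    [NormedAddCommGroup U] [InnerProductSpace ℝ U] [FiniteDimensional ℝ U]
    {m k : ℕ} (e : OrthonormalBasis (Fin m) ℝ V) (f : OrthonormalBasis (Fin k) ℝ W)
    (cV : V → (U →ₗ[ℝ] U)) (cW : W → (U →ₗ[ℝ] U))
    (hcV : ∀ v v' : V, cV v ∘ₗ cV v' + cV v' ∘ₗ cV v = (-2 * ⟪v, v'⟫) • LinearMap.id)
    (hcW : ∀ w w' : W, cW w ∘ₗ cW w' + cW w' ∘ₗ cW w = (2 * ⟪w, w'⟫) • LinearMap.id)
    (hmix : ∀ (v : V) (w : W), cV v ∘ₗ cW w + cW w ∘ₗ cV v = 0)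
    (hcVskew : ∀ v : V, LinearMap.adjoint (cV v) = -(cV v))
    (hcWself : ∀ w : W, LinearMap.adjoint (cW w) = cW w)
    (𝔤 : Submodule ℝ (V →ₗ[ℝ] V))
    (h𝔤skew : ∀ g ∈ 𝔤, LinearMap.adjoint g = -g)
    (h𝔤lie : ∀ g ∈ 𝔤, ∀ h ∈ 𝔤, g ∘ₗ h - h ∘ₗ g ∈ 𝔤)
    (h𝔤full : Algebra.adjoin ℝ (𝔤 : Set (Module.End ℝ V)) = ⊤)
    (L : V →ₗ[ℝ] W) (u : U) (hu : ‖u‖ = 1)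
    (hvanish : ∀ ρ : Module.End ℝ V, ρ ∈ Algebra.adjoin ℝ (𝔤 : Set (Module.End ℝ V)) →
      cliffordOfMap e f cV cW (L ∘ₗ ρ) u = 0) :
    L = 0 :=
  map_vanishes_of_clifford_relations_real_type_general e f cV cW hcV hcW 𝔤 h𝔤full L u hu hvanish
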